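/- For a real symmetric n×n matrix A with all entries in [−a, a] (a ≥ 0), the spectral spread satisfies λ_max(A) − λ_min(A) ≤ √2 · a · n. -/

import Mathlib

/-!
The squares of the eigenvalues of a Hermitian matrix sum to its squared Frobenius norm
`∑ |A i j|²`, which is at most `n² a²`. Since `(x - y)² ≤ 2 (x² + y²)`, taking
`x = λ_max` and `y = λ_min` gives `(λ_max - λ_min)² ≤ 2 n² a²`.
-/

open Matrix Finset

namespace Matrix

variable {𝕜 ι : Type*} [RCLike 𝕜] [Fintype ι] [DecidableEq ι]

theorem trace_conjStarAlgAut (U : unitary (Matrix ι ι 𝕜)) (M : Matrix ι ι 𝕜) :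
    (Unitary.conjStarAlgAut 𝕜 _ U M).trace = M.trace := by
  rw [Unitary.conjStarAlgAut_apply, trace_mul_cycle, Unitary.coe_star_mul_self, one_mul]

theorem IsHermitian.trace_mul_self_eq_sum_eigenvalues_sq {A : Matrix ι ι 𝕜}
    (hA : A.IsHermitian) :
    (A * A).trace = ∑ i, (hA.eigenvalues i : 𝕜) ^ 2 := by
  conv_lhs => rw [hA.spectral_theorem, ← map_mul, trace_conjStarAlgAut]
  simp [diagonal_mul_diagonal, trace_diagonal, sq]

theorem IsHermitian.sum_eigenvalues_sq_eq_sum_norm_sq {A : Matrix ι ι 𝕜}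
    (hA : A.IsHermitian) :
    ∑ i, hA.eigenvalues i ^ 2 = ∑ i, ∑ j, ‖A i j‖ ^ 2 := by
  apply RCLike.ofReal_injective (K := 𝕜)
  push_cast
  rw [← hA.trace_mul_self_eq_sum_eigenvalues_sq]
  nth_rw 2 [← hA.eq]
  simp [trace, mul_apply, RCLike.mul_conj]

end Matrix

theorem Finset.sup'_sub_inf'_le_sqrt_two_mul_sum_sq {ι : Type*} {s : Finset ι} (hs : s.Nonempty)
    (x : ι → ℝ) :
    s.sup' hs x - s.inf' hs x ≤ √(2 * ∑ k ∈ s, x k ^ 2) := by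
  obtain ⟨i, hi, hmax⟩ := s.exists_mem_eq_sup' hs x
  obtain ⟨j, hj, hmin⟩ := s.exists_mem_eq_inf' hs x
  rw [hmax, hmin]
  apply Real.le_sqrt_of_sq_le
  classical
  by_cases hij : i = j
  · rw [hij, sub_self, zero_pow two_ne_zero]
    positivity
  have hpair : x i ^ 2 + x j ^ 2 ≤ ∑ k ∈ s, x k ^ 2 := by
    rw [← sum_pair (f := fun k => x k ^ 2) hij]
    exact sum_le_sum_of_subset_of_nonneg (by simp [insert_subset_iff, hi, hj])
      (fun k _ _ => sq_nonneg (x k))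
  nlinarith [sq_nonneg (x i + x j)]

theorem Fintype.sum_sum_sq_le_of_abs_le {ι : Type*} [Fintype ι] (B : ι → ι → ℝ) {a : ℝ}
    (h : ∀ i j, |B i j| ≤ a) :
    ∑ i, ∑ j, B i j ^ 2 ≤ (Fintype.card ι * a) ^ 2 := by
  calc ∑ i, ∑ j, B i j ^ 2 ≤ ∑ _i : ι, ∑ _j : ι, a ^ 2 := by
        refine sum_le_sum fun i _ => sum_le_sum fun j _ => ?_
        exact sq_le_sq' (abs_le.mp (h i j)).1 (abs_le.mp (h i j)).2
    _ = (Fintype.card ι * a) ^ 2 := by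
        rw [sum_const, sum_const, card_univ, nsmul_eq_mul, nsmul_eq_mul]
        ring

theorem stmt_5 {n : ℕ} [NeZero n] (A : Matrix (Fin n) (Fin n) ℝ) (hA : A.IsHermitian)
    (a : ℝ) (ha : 0 ≤ a) (hbound : ∀ i j, |A i j| ≤ a) :
    Finset.univ.sup' Finset.univ_nonempty hA.eigenvalues -
      Finset.univ.inf' Finset.univ_nonempty hA.eigenvalues ≤ Real.sqrt 2 * a * n := by
  have hfrob : ∑ i, hA.eigenvalues i ^ 2 ≤ (n * a) ^ 2 := by
    simpa [hA.sum_eigenvalues_sq_eq_sum_norm_sq] using Fintype.sum_sum_sq_le_of_abs_le A hbound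
  calc _ ≤ √(2 * ∑ i, hA.eigenvalues i ^ 2) := univ.sup'_sub_inf'_le_sqrt_two_mul_sum_sq _ _
    _ ≤ √(2 * (n * a) ^ 2) := by gcongr
    _ = √2 * a * n := by
      rw [Real.sqrt_mul zero_le_two, Real.sqrt_sq (by positivity)]
      ring
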